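/- arXiv:1810.02299 — 2 statements merged into one kernel-verified Lean document; each statement's English description precedes it below -/
import Mathlib

section
/- Let (b_n)_{n≥1} be a sequence of nonnegative reals with Σ_{n≥1} n·b_n < ∞. Then −Σ_{n≥1} b_n log b_n < ∞ (with the convention 0·log 0 = 0). -/
/-!
Compare `b n` with `n⁻²`. Where `b n ≤ n⁻²`, the monotonicity of `-x log x` on `[0, e⁻¹]` bounds
`-b n log (b n)` by `2 log n / n²`; where `b n > n⁻²`, we have `-log (b n) < 2 log n ≤ 2 n`, so
`-b n log (b n) ≤ 2 n b n`. Both majorants are summable.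
-/

open Real Filter

lemma negMulLog_le_negMulLog_add_mul_neg_log {t x : ℝ} (ht : 0 < t) (hte : t ≤ exp (-1))
    (hx : 0 ≤ x) : negMulLog x ≤ negMulLog t + x * -log t := by
  have ht1 : t ≤ 1 := hte.trans (exp_le_one_iff.2 (by norm_num))
  rcases le_or_gt x t with hxt | htx
  · have hanti : t * log t ≤ x * log x :=
      mul_log_strictAntiOn.antitoneOn ⟨hx, hxt.trans hte⟩ ⟨ht.le, hte⟩ hxt
    have : 0 ≤ x * -log t := mul_nonneg hx (neg_nonneg.2 (log_nonpos ht.le ht1))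
    simp only [negMulLog, neg_mul]
    linarith
  · have hlog : x * -log x ≤ x * -log t := by gcongr
    have := negMulLog_nonneg ht.le ht1
    simp only [negMulLog, neg_mul] at this ⊢
    linarith

lemma negMulLog_le_two_mul_log_div_sq_add {n x : ℝ} (hn : 2 ≤ n) (hx : 0 ≤ x) :
    negMulLog x ≤ 2 * (log n / n ^ 2) + 2 * (log n * x) := by
  have hn2 : 0 < n ^ 2 := by positivity
  have hexp : (n ^ 2)⁻¹ ≤ exp (-1) := by
    rw [exp_neg]
    gcongr
    nlinarith [exp_one_lt_d9]
  have hlog : log (n ^ 2)⁻¹ = -(2 * log n) := by rw [log_inv, log_pow]; push_cast; ring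
  calc negMulLog x ≤ negMulLog (n ^ 2)⁻¹ + x * -log (n ^ 2)⁻¹ :=
        negMulLog_le_negMulLog_add_mul_neg_log (inv_pos.2 hn2) hexp hx
    _ = 2 * (log n / n ^ 2) + 2 * (log n * x) := by
        rw [negMulLog, hlog]; field_simp

lemma summable_log_div_sq : Summable fun n : ℕ => log n / (n : ℝ) ^ 2 := by
  refine .of_nonneg_of_le (fun n => by positivity) (fun n => ?_)
    ((summable_nat_rpow.2 (by norm_num : (-3 / 2 : ℝ) < -1)).mul_left 2)
  rcases n.eq_zero_or_pos with rfl | hn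
  · simp
  have hn : (0 : ℝ) < n := by exact_mod_cast hn
  calc log n / (n : ℝ) ^ 2 ≤ (n : ℝ) ^ (1 / 2 : ℝ) / (1 / 2) / (n : ℝ) ^ 2 := by
        gcongr; exact log_le_rpow_div hn.le (by norm_num)
    _ = 2 * ((n : ℝ) ^ (1 / 2 : ℝ) / (n : ℝ) ^ (2 : ℝ)) := by rw [rpow_two]; ring
    _ = 2 * (n : ℝ) ^ (-3 / 2 : ℝ) := by rw [← rpow_sub hn]; norm_num

/-- If `b n ≥ 0` and `∑ n * b n < ∞`, then `−∑ b n * log (b n)`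
is finite (convergent), with the convention `0 * log 0 = 0` (which holds in
Mathlib since `Real.log 0 = 0`). -/
theorem stmt2 (b : ℕ → ℝ) (hb : ∀ n, 0 ≤ b n)
    (hsum : Summable fun n : ℕ => (n : ℝ) * b n) :
    Summable fun n : ℕ => -(b n * Real.log (b n)) := by
  refine .of_norm_bounded_eventually_nat ((summable_log_div_sq.mul_left 2).add (hsum.mul_left 2)) ?_
  filter_upwards [hsum.tendsto_atTop_zero.eventually_le_const zero_lt_one,
    eventually_ge_atTop 2] with n hnb hn
  have hn' : (2 : ℝ) ≤ n := by exact_mod_cast hn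
  have hb1 : b n ≤ 1 := by nlinarith [hb n]
  rw [← neg_mul, ← negMulLog, norm_of_nonneg (negMulLog_nonneg (hb n) hb1)]
  calc negMulLog (b n) ≤ 2 * (log n / n ^ 2) + 2 * (log n * b n) :=
        negMulLog_le_two_mul_log_div_sq_add hn' (hb n)
    _ ≤ 2 * (log n / n ^ 2) + 2 * (n * b n) := by
        gcongr
        · exact hb n
        · exact log_le_self (Nat.cast_nonneg n)
end

section
/- Let T be a measurable map of a measurable space, λ a probability measure, and suppose there is C_0 > 0 such that for every measurable set A and every n ≥ 0, C_0^{-1}·λ(A) ≤ λ(T^{-n}(A)) ≤ C_0·λ(A). Then any weak-* accumulation point μ of the Cesàro averages (1/n)Σ_{i=0}^{n−1} T^i_*λ is a T-invariant probability measure absolutely continuous with respect to λ, with Radon–Nikodym density ρ satisfying C_0^{-1} ≤ ρ ≤ C_0 λ-a.e. -/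
/-!
Every Cesàro average `νₙ` of `λ` satisfies `C₀⁻¹ • λ ≤ νₙ ≤ C₀ • λ`. By the portmanteau theorem
these bounds pass to the weak limit `μ` on open and on closed sets, and by the regularity of `λ`
to all Borel sets; hence `μ ≪ λ` with density in `[C₀⁻¹, C₀]`. The common bound `νₙ ≤ C₀ • λ`
also upgrades weak convergence to setwise convergence, since indicators are `L¹(λ)`-limits of
bounded continuous functions, and `νₙ(T⁻¹ A) - νₙ(A) = (λ(T⁻ⁿ A) - λ(A)) / n → 0` then gives
`μ(T⁻¹ A) = μ(A)`.
-/

open MeasureTheory Filter Topology ENNReal BoundedContinuousFunction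

namespace MeasureTheory.Measure

variable {X : Type*} [MeasurableSpace X]

-- For `n = 0` this is `⊤ • 0 = 0`.
noncomputable def cesaroAverage (T : X → X) (μ : Measure X) (n : ℕ) : Measure X :=
  (n : ℝ≥0∞)⁻¹ • ∑ i ∈ Finset.range n, μ.map T^[i]

variable {T : X → X} {μ ν ρ : Measure X} {n : ℕ} {c : ℝ≥0∞}

lemma cesaroAverage_apply (hT : Measurable T) {A : Set X} (hA : MeasurableSet A) :
    cesaroAverage T μ n A = (n : ℝ≥0∞)⁻¹ * ∑ i ∈ Finset.range n, μ (T^[i] ⁻¹' A) := by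
  simp only [cesaroAverage, smul_apply, finsetSum_apply, smul_eq_mul,
    map_apply (hT.iterate _) hA]

lemma inv_natCast_smul_sum_range_const (hn : n ≠ 0) :
    (n : ℝ≥0∞)⁻¹ • ∑ _i ∈ Finset.range n, ρ = ρ := by
  rw [Finset.sum_const, Finset.card_range, ← Nat.cast_smul_eq_nsmul ℝ≥0∞, smul_smul,
    ENNReal.inv_mul_cancel (by exact_mod_cast hn) (natCast_ne_top n), one_smul]

lemma cesaroAverage_le (h : ∀ i, μ.map T^[i] ≤ ρ) : cesaroAverage T μ n ≤ ρ := by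
  rcases eq_or_ne n 0 with rfl | hn
  · simp only [cesaroAverage, Finset.range_zero, Finset.sum_empty, smul_zero]
    exact Measure.zero_le ρ
  calc cesaroAverage T μ n ≤ (n : ℝ≥0∞)⁻¹ • ∑ _i ∈ Finset.range n, ρ := by
        unfold cesaroAverage; gcongr with i; exact h i
    _ = ρ := inv_natCast_smul_sum_range_const hn

lemma le_cesaroAverage (hn : n ≠ 0) (h : ∀ i, ρ ≤ μ.map T^[i]) : ρ ≤ cesaroAverage T μ n := by
  calc ρ = (n : ℝ≥0∞)⁻¹ • ∑ _i ∈ Finset.range n, ρ := (inv_natCast_smul_sum_range_const hn).symm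
    _ ≤ cesaroAverage T μ n := by unfold cesaroAverage; gcongr with i; exact h i

lemma isProbabilityMeasure_cesaroAverage [IsProbabilityMeasure μ] (hT : Measurable T)
    (hn : n ≠ 0) : IsProbabilityMeasure (cesaroAverage T μ n) := by
  constructor
  rw [cesaroAverage_apply hT MeasurableSet.univ]
  simp only [Set.preimage_univ, measure_univ, Finset.sum_const, Finset.card_range,
    nsmul_eq_mul, mul_one]
  exact ENNReal.inv_mul_cancel (by exact_mod_cast hn) (natCast_ne_top n)

lemma cesaroAverage_real_apply [IsFiniteMeasure μ] (hT : Measurable T) {A : Set X}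
    (hA : MeasurableSet A) :
    (cesaroAverage T μ n).real A = (n : ℝ)⁻¹ * ∑ i ∈ Finset.range n, μ.real (T^[i] ⁻¹' A) := by
  rw [measureReal_def, cesaroAverage_apply hT hA, toReal_mul, toReal_inv, toReal_natCast,
    toReal_sum fun i _ => measure_ne_top μ _]
  rfl

-- The sums telescope to `μ(T^{-n} A) - μ(A)`, a difference of two numbers in `[0, 1]`.
lemma abs_cesaroAverage_real_preimage_sub_le [IsProbabilityMeasure μ] (hT : Measurable T)
    {A : Set X} (hA : MeasurableSet A) :
    |(cesaroAverage T μ n).real (T ⁻¹' A) - (cesaroAverage T μ n).real A| ≤ (n : ℝ)⁻¹ := by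
  have hshift : ∀ i, T^[i] ⁻¹' (T ⁻¹' A) = T^[i + 1] ⁻¹' A := fun i => by
    rw [← Set.preimage_comp, ← Function.iterate_succ']
  rw [cesaroAverage_real_apply hT (hT hA), cesaroAverage_real_apply hT hA, ← mul_sub,
    ← Finset.sum_sub_distrib]
  simp only [hshift]
  rw [Finset.sum_range_sub (fun i => μ.real (T^[i] ⁻¹' A)), abs_mul, abs_inv, Nat.abs_cast]
  refine mul_le_of_le_one_right (by positivity) (abs_sub_le_of_nonneg_of_le ?_ ?_ ?_ ?_) <;>
    simp [measureReal_nonneg, measureReal_le_one]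

lemma smul_le_map_iff (hT : Measurable T) :
    c • μ ≤ μ.map T ↔ ∀ A, MeasurableSet A → c * μ A ≤ μ (T ⁻¹' A) := by
  simp only [le_iff, smul_apply, smul_eq_mul]
  exact forall₂_congr fun A hA => by rw [map_apply hT hA]

lemma map_le_smul_iff (hT : Measurable T) :
    μ.map T ≤ c • μ ↔ ∀ A, MeasurableSet A → μ (T ⁻¹' A) ≤ c * μ A := by
  simp only [le_iff, smul_apply, smul_eq_mul]
  exact forall₂_congr fun A hA => by rw [map_apply hT hA]

lemma rnDeriv_le_of_le_smul [SigmaFinite ν] (h : μ ≤ c • ν) : μ.rnDeriv ν ≤ᵐ[ν] fun _ => c :=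
  ae_le_of_forall_setLIntegral_le_of_sigmaFinite (μ.measurable_rnDeriv ν) fun s _ _ => by
    rw [setLIntegral_const]
    exact (setLIntegral_rnDeriv_le s).trans (h s)

lemma le_rnDeriv_of_smul_le [SigmaFinite ν] [HaveLebesgueDecomposition μ ν] (hμν : μ ≪ ν)
    (h : c • ν ≤ μ) : (fun _ => c) ≤ᵐ[ν] μ.rnDeriv ν :=
  ae_le_of_forall_setLIntegral_le_of_sigmaFinite measurable_const fun s _ _ => by
    rw [setLIntegral_const, setLIntegral_rnDeriv hμν]
    exact h s

lemma isProbabilityMeasure_of_tendsto_integral_one {ι : Type*} {l : Filter ι} [l.NeBot]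
    {μs : ι → Measure X} [∀ i, IsProbabilityMeasure (μs i)]
    (h : Tendsto (fun i => ∫ _, (1 : ℝ) ∂μs i) l (𝓝 (∫ _, (1 : ℝ) ∂μ))) :
    IsProbabilityMeasure μ := by
  have h1 : ∫ _, (1 : ℝ) ∂μ = 1 := tendsto_nhds_unique h (by simp)
  exact ⟨(toReal_eq_one_iff _).1 (by simpa [measureReal_def] using h1)⟩

end MeasureTheory.Measure

namespace MeasureTheory.ProbabilityMeasure

variable {X ι : Type*} [TopologicalSpace X] [MeasurableSpace X] [OpensMeasurableSpace X]
  [HasOuterApproxClosed X] {l : Filter ι} [l.NeBot] {ν : ι → ProbabilityMeasure X}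
  {μ : ProbabilityMeasure X} {ρ : Measure X}

lemma toMeasure_le_of_tendsto [ρ.OuterRegular] (hν : Tendsto ν l (𝓝 μ))
    (hle : ∀ᶠ i in l, (ν i : Measure X) ≤ ρ) : (μ : Measure X) ≤ ρ := by
  refine Measure.le_iff'.2 fun s => ?_
  rw [s.measure_eq_iInf_isOpen ρ]
  refine le_iInf₂ fun U hsU => le_iInf fun hU => (measure_mono hsU).trans ?_
  calc (μ : Measure X) U ≤ l.liminf fun i => (ν i : Measure X) U :=
        le_liminf_measure_open_of_tendsto hν hU
    _ ≤ l.liminf fun _ => ρ U := liminf_le_liminf (hle.mono fun i hi => hi U)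
    _ = ρ U := liminf_const _

lemma le_toMeasure_of_tendsto [ρ.WeaklyRegular] [IsFiniteMeasure ρ] (hν : Tendsto ν l (𝓝 μ))
    (hle : ∀ᶠ i in l, ρ ≤ ν i) : ρ ≤ μ := by
  refine Measure.le_iff.2 fun s hs => ?_
  rw [hs.measure_eq_iSup_isClosed_of_ne_top (measure_ne_top ρ s)]
  refine iSup₂_le fun F hFs => iSup_le fun hF => le_trans ?_ (measure_mono hFs)
  calc ρ F = l.limsup fun _ => ρ F := (limsup_const _).symm
    _ ≤ l.limsup fun i => (ν i : Measure X) F := limsup_le_limsup (hle.mono fun i hi => hi F)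
    _ ≤ (μ : Measure X) F := limsup_measure_closed_le_of_tendsto hν hF

end MeasureTheory.ProbabilityMeasure

namespace MeasureTheory.Measure

variable {X ι : Type*} [TopologicalSpace X] [MeasurableSpace X] {l : Filter ι}
  {ν : ι → Measure X} {μ ρ : Measure X}

lemma dist_measureReal_integral_le_of_le [OpensMeasurableSpace X] [IsFiniteMeasure ρ]
    (h : μ ≤ ρ) {B : Set X} (hB : MeasurableSet B) (g : X →ᵇ ℝ) :
    dist (μ.real B) (∫ x, g x ∂μ) ≤ ∫ x, ‖B.indicator (1 : X → ℝ) x - g x‖ ∂ρ := by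
  have := isFiniteMeasure_of_le ρ h
  have hind (σ : Measure X) [IsFiniteMeasure σ] : Integrable (B.indicator (1 : X → ℝ)) σ :=
    (integrable_const 1).indicator hB
  rw [← integral_indicator_one hB, dist_eq_norm, ← integral_sub (hind μ) (g.integrable μ)]
  exact (norm_integral_le_integral_norm _).trans (integral_mono_measure h
    (ae_of_all _ fun _ => norm_nonneg _) ((hind ρ).sub (g.integrable ρ)).norm)

variable [NormalSpace X] [BorelSpace X]

lemma tendsto_measureReal_of_forall_integral_tendsto [IsFiniteMeasure ρ] [ρ.WeaklyRegular]
    (hνμ : ∀ g : X →ᵇ ℝ, Tendsto (fun i => ∫ x, g x ∂ν i) l (𝓝 (∫ x, g x ∂μ)))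
    (hνρ : ∀ᶠ i in l, ν i ≤ ρ) (hμρ : μ ≤ ρ) {B : Set X} (hB : MeasurableSet B) :
    Tendsto (fun i => (ν i).real B) l (𝓝 (μ.real B)) := by
  refine Metric.tendsto_nhds.2 fun ε hε => ?_
  obtain ⟨g, hg, -⟩ := ((integrable_const (1 : ℝ)).indicator hB
    ).exists_boundedContinuous_integral_sub_le (μ := ρ) (by positivity : 0 < ε / 4)
  filter_upwards [hνρ, Metric.tendsto_nhds.1 (hνμ g) _ (by positivity : 0 < ε / 4)] with i hi hgi
  calc dist ((ν i).real B) (μ.real B)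
      ≤ dist ((ν i).real B) (∫ x, g x ∂ν i) + dist (∫ x, g x ∂ν i) (∫ x, g x ∂μ)
        + dist (∫ x, g x ∂μ) (μ.real B) := dist_triangle4 _ _ _ _
    _ ≤ ε / 4 + ε / 4 + ε / 4 := by
        rw [dist_comm (∫ x, g x ∂μ)]
        exact add_le_add (add_le_add ((dist_measureReal_integral_le_of_le hi hB g).trans hg)
          hgi.le) ((dist_measureReal_integral_le_of_le hμρ hB g).trans hg)
    _ < ε := by linarith

lemma map_eq_self_of_forall_integral_tendsto [l.NeBot] [IsFiniteMeasure ρ] [ρ.WeaklyRegular]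
    (hνμ : ∀ g : X →ᵇ ℝ, Tendsto (fun i => ∫ x, g x ∂ν i) l (𝓝 (∫ x, g x ∂μ)))
    (hνρ : ∀ᶠ i in l, ν i ≤ ρ) (hμρ : μ ≤ ρ) {T : X → X} (hT : Measurable T)
    (hinv : ∀ A, MeasurableSet A →
      Tendsto (fun i => (ν i).real (T ⁻¹' A) - (ν i).real A) l (𝓝 0)) :
    μ.map T = μ := by
  have := isFiniteMeasure_of_le ρ hμρ
  ext A hA
  rw [map_apply hT hA, ← measureReal_eq_measureReal_iff, ← sub_eq_zero]
  exact tendsto_nhds_unique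
    ((tendsto_measureReal_of_forall_integral_tendsto hνμ hνρ hμρ (hT hA)).sub
      (tendsto_measureReal_of_forall_integral_tendsto hνμ hνρ hμρ hA)) (hinv A hA)

end MeasureTheory.Measure

theorem stmt3_general {X : Type*} [MetricSpace X]
    [MeasurableSpace X] [BorelSpace X]
    (T : X → X) (hT : Measurable T)
    (lam : Measure X) [IsProbabilityMeasure lam]
    (C₀ : ℝ)
    (hbd : ∀ (A : Set X), MeasurableSet A → ∀ n : ℕ,
      ENNReal.ofReal C₀⁻¹ * lam A ≤ lam (T^[n] ⁻¹' A) ∧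
      lam (T^[n] ⁻¹' A) ≤ ENNReal.ofReal C₀ * lam A)
    (μ : Measure X)
    (φ : ℕ → ℕ) (hφ : StrictMono φ) (hφpos : ∀ n, 0 < φ n)
    (hacc : ∀ f : X → ℝ, Continuous f →
      Tendsto (fun n : ℕ =>
          ∫ x, f x ∂(((φ n : ℝ≥0∞))⁻¹ •
            ∑ i ∈ Finset.range (φ n), Measure.map (T^[i]) lam))
        atTop (𝓝 (∫ x, f x ∂μ))) :
    IsProbabilityMeasure μ ∧ Measure.map T μ = μ ∧ μ ≪ lam ∧
      ∀ᵐ x ∂lam, ENNReal.ofReal C₀⁻¹ ≤ μ.rnDeriv lam x ∧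
        μ.rnDeriv lam x ≤ ENNReal.ofReal C₀ := by
  set ν : ℕ → Measure X := fun n => Measure.cesaroAverage T lam (φ n)
  have := lam.smul_finite (ofReal_ne_top (r := C₀))
  have := lam.smul_finite (ofReal_ne_top (r := C₀⁻¹))
  have hlower : ∀ i, ENNReal.ofReal C₀⁻¹ • lam ≤ lam.map T^[i] := fun i =>
    (Measure.smul_le_map_iff (hT.iterate i)).2 fun A hA => (hbd A hA i).1
  have hupper : ∀ i, lam.map T^[i] ≤ ENNReal.ofReal C₀ • lam := fun i =>
    (Measure.map_le_smul_iff (hT.iterate i)).2 fun A hA => (hbd A hA i).2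
  have hprob : ∀ n, IsProbabilityMeasure (ν n) := fun n =>
    Measure.isProbabilityMeasure_cesaroAverage hT (hφpos n).ne'
  have hνμ : ∀ g : X →ᵇ ℝ, Tendsto (fun n => ∫ x, g x ∂ν n) atTop (𝓝 (∫ x, g x ∂μ)) :=
    fun g => hacc g g.continuous
  have hμ : IsProbabilityMeasure μ := Measure.isProbabilityMeasure_of_tendsto_integral_one (hνμ 1)
  let νP : ℕ → ProbabilityMeasure X := fun n => ⟨ν n, hprob n⟩
  let μP : ProbabilityMeasure X := ⟨μ, hμ⟩
  have hweak : Tendsto νP atTop (𝓝 μP) :=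
    ProbabilityMeasure.tendsto_iff_forall_integral_tendsto.2 hνμ
  have hνle : ∀ᶠ n in atTop, ν n ≤ ENNReal.ofReal C₀ • lam :=
    .of_forall fun n => Measure.cesaroAverage_le hupper
  have hμle : μ ≤ ENNReal.ofReal C₀ • lam := ProbabilityMeasure.toMeasure_le_of_tendsto hweak hνle
  have hleμ : ENNReal.ofReal C₀⁻¹ • lam ≤ μ := ProbabilityMeasure.le_toMeasure_of_tendsto hweak
    (.of_forall fun n => Measure.le_cesaroAverage (hφpos n).ne' hlower)
  have hμlam : μ ≪ lam := Measure.absolutelyContinuous_of_le_smul hμle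
  refine ⟨hμ, ?_, hμlam, ?_⟩
  · refine Measure.map_eq_self_of_forall_integral_tendsto hνμ hνle hμle hT fun A hA => ?_
    exact squeeze_zero_norm (fun n => Measure.abs_cesaroAverage_real_preimage_sub_le hT hA)
      (tendsto_inv_atTop_zero.comp (tendsto_natCast_atTop_atTop.comp hφ.tendsto_atTop))
  · filter_upwards [Measure.le_rnDeriv_of_smul_le hμlam hleμ,
      Measure.rnDeriv_le_of_le_smul hμle] with x hlo hup
    exact ⟨hlo, hup⟩

/-- If `C₀⁻¹ λ(A) ≤ λ(T⁻ⁿ A) ≤ C₀ λ(A)` for all measurable `A`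
and all `n`, then any weak-* accumulation point `μ` of the Cesàro averages
`(1/n) ∑ T^i_* λ` is a `T`-invariant probability measure absolutely continuous
w.r.t. `λ` with density between `C₀⁻¹` and `C₀`. -/
theorem stmt3 {X : Type*} [MetricSpace X] [CompactSpace X]
    [MeasurableSpace X] [BorelSpace X]
    (T : X → X) (hT : Measurable T)
    (lam : Measure X) [IsProbabilityMeasure lam]
    (C₀ : ℝ) (hC₀ : 0 < C₀)
    (hbd : ∀ (A : Set X), MeasurableSet A → ∀ n : ℕ,
      ENNReal.ofReal C₀⁻¹ * lam A ≤ lam (T^[n] ⁻¹' A) ∧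
      lam (T^[n] ⁻¹' A) ≤ ENNReal.ofReal C₀ * lam A)
    (μ : Measure X)
    (φ : ℕ → ℕ) (hφ : StrictMono φ) (hφpos : ∀ n, 0 < φ n)
    (hacc : ∀ f : X → ℝ, Continuous f →
      Tendsto (fun n : ℕ =>
          ∫ x, f x ∂(((φ n : ℝ≥0∞))⁻¹ •
            ∑ i ∈ Finset.range (φ n), Measure.map (T^[i]) lam))
        atTop (𝓝 (∫ x, f x ∂μ))) :
    IsProbabilityMeasure μ ∧ Measure.map T μ = μ ∧ μ ≪ lam ∧
      ∀ᵐ x ∂lam, ENNReal.ofReal C₀⁻¹ ≤ μ.rnDeriv lam x ∧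
        μ.rnDeriv lam x ≤ ENNReal.ofReal C₀ :=
  stmt3_general T hT lam C₀ hbd μ φ hφ hφpos hacc
end
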